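/- Row 2 of the learned predicate π° is sound: let W be a path in G(m,n) whose last vertex is not a corner of the square s(i,j) (i < m, j < n), and suppose cnt(W, s(i,j)) = 1. Then every path W' having W as a prefix satisfies cnt(W', s(i,j)) ≤ 2. In particular, W is not a prefix of any path containing exactly 3 edges of S(i,j). -/

import Mathlib

open SimpleGraph

/-- The grid graph on `(m+1) × (n+1)` vertices: two vertices are adjacent iff
the sum of the absolute differences of their coordinates (in `ℤ`) equals `1`. -/
def gridGraph (m n : ℕ) : SimpleGraph (Fin (m+1) × Fin (n+1)) where
  Adj u v := |(u.1 : ℤ) - (v.1 : ℤ)| + |(u.2 : ℤ) - (v.2 : ℤ)| = 1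
  symm := by
    constructor
    intro u v h
    rw [abs_sub_comm ((u.1 : ℤ)), abs_sub_comm ((u.2 : ℤ))] at h
    exact h
  loopless := by constructor; intro u h; simp at h

/-- The four corners of the square `s(i,j)`. -/
def squareCorners {m n : ℕ} (i : Fin m) (j : Fin n) :
    Finset (Fin (m+1) × Fin (n+1)) :=
  {(i.castSucc, j.castSucc), (i.succ, j.castSucc),
   (i.castSucc, j.succ), (i.succ, j.succ)}

/-- The four boundary edges of the square `s(i,j)`. -/
def squareEdges {m n : ℕ} (i : Fin m) (j : Fin n) :
    Finset (Sym2 (Fin (m+1) × Fin (n+1))) :=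
  { s((i.castSucc, j.castSucc), (i.succ, j.castSucc)),
    s((i.castSucc, j.succ), (i.succ, j.succ)),
    s((i.castSucc, j.castSucc), (i.castSucc, j.succ)),
    s((i.succ, j.castSucc), (i.succ, j.succ)) }

/-- The number of edges of the walk `W` lying on the boundary of square `s(i,j)`. -/
def cnt {m n : ℕ} {u v : Fin (m+1) × Fin (n+1)}
    (W : (gridGraph m n).Walk u v) (i : Fin m) (j : Fin n) : ℕ :=
  (W.edges.filter (fun e => e ∈ squareEdges i j)).length

/-!
The unique boundary edge `e₀` of `s(i,j)` on `W` has both endpoints on `W`. Since `W.append X`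
is a path and the junction `v` is not a corner, `X` avoids both endpoints of `e₀`; but in the
4-cycle bounding the square only the edge opposite to `e₀` avoids them. So the extension `X`
contributes at most one further boundary edge.
-/

theorem Sym2.exists_eq_of_forall_notMem_of_mem_cycle4 {α : Type*} [DecidableEq α]
    (a b c d : α) {e₀ : Sym2 α} (h₀ : e₀ ∈ ({s(a, b), s(c, d), s(a, c), s(b, d)} : Finset _)) :
    ∃ o, ∀ e ∈ ({s(a, b), s(c, d), s(a, c), s(b, d)} : Finset _), (∀ x ∈ e₀, x ∉ e) → e = o := by
  simp only [Finset.mem_insert, Finset.mem_singleton] at h₀ ⊢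
  rcases h₀ with rfl | rfl | rfl | rfl <;>
    [use s(c, d); use s(a, b); use s(b, d); use s(a, c)] <;>
    rintro e (rfl | rfl | rfl | rfl) h <;>
    first
    | rfl
    | simp [forall_eq_or_imp] at h

section

variable {m n : ℕ} {i : Fin m} {j : Fin n}

lemma mem_squareCorners_of_mem_squareEdges {e : Sym2 (Fin (m+1) × Fin (n+1))}
    (he : e ∈ squareEdges i j) {x : Fin (m+1) × Fin (n+1)} (hx : x ∈ e) :
    x ∈ squareCorners i j := by
  simp only [squareEdges, Finset.mem_insert, Finset.mem_singleton] at he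
  rcases he with rfl | rfl | rfl | rfl <;> rcases Sym2.mem_iff.mp hx with rfl | rfl <;>
    simp [squareCorners]

lemma cnt_append {u v w : Fin (m+1) × Fin (n+1)} (W : (gridGraph m n).Walk u v)
    (X : (gridGraph m n).Walk v w) : cnt (W.append X) i j = cnt W i j + cnt X i j := by
  simp [cnt, Walk.edges_append, List.filter_append]

lemma cnt_le_one_of_isPath_append {u v w : Fin (m+1) × Fin (n+1)}
    {W : (gridGraph m n).Walk u v} {X : (gridGraph m n).Walk v w}
    (hWX : (W.append X).IsPath) (hv : v ∉ squareCorners i j) (hW : 0 < cnt W i j) :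
    cnt X i j ≤ 1 := by
  obtain ⟨e₀, he₀⟩ := List.exists_mem_of_length_pos hW
  rw [List.mem_filter, decide_eq_true_iff] at he₀
  obtain ⟨o, ho⟩ := Sym2.exists_eq_of_forall_notMem_of_mem_cycle4 _ _ _ _ he₀.2
  have hX_avoids : ∀ e ∈ X.edges, ∀ x ∈ e₀, x ∉ e := fun e he x hx hxe ↦
    hWX.ne_of_mem_support_of_append
      (fun hxv ↦ hv (hxv ▸ mem_squareCorners_of_mem_squareEdges he₀.2 hx))
      (Walk.mem_support_of_mem_edges he₀.1 hx) (Walk.mem_support_of_mem_edges he hxe) rfl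
  have hsub : X.edges.filter (· ∈ squareEdges i j) ⊆ [o] := by
    intro e he
    rw [List.mem_filter, decide_eq_true_iff] at he
    exact List.mem_singleton.mpr (ho e he.2 (hX_avoids e he.1))
  exact (List.subperm_of_subset (hWX.of_append_right.edges_nodup.filter _) hsub).length_le

end

theorem row2_sound_general {m n : ℕ} {u v w : Fin (m+1) × Fin (n+1)}
    (i : Fin m) (j : Fin n)
    (W : (gridGraph m n).Walk u v)
    (hv : v ∉ squareCorners i j) (hcnt : cnt W i j = 1)
    (W' : (gridGraph m n).Walk u w) (hW' : W'.IsPath)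
    (hpre : ∃ X : (gridGraph m n).Walk v w, W' = W.append X) :
    cnt W' i j ≤ 2 ∧ cnt W' i j ≠ 3 := by
  obtain ⟨X, rfl⟩ := hpre
  have hX := cnt_le_one_of_isPath_append hW' hv (hcnt ▸ Nat.one_pos)
  rw [cnt_append]
  omega

/-- Row 2 of the learned predicate is sound: if a path `W` ends at a vertex that
is not a corner of the square `s(i,j)` and contains exactly one boundary edge of
that square, then every path extending `W` contains at most two boundary edges
of the square; in particular `W` is not a prefix of any path containing exactly
three of them. -/
theorem row2_sound {m n : ℕ} {u v w : Fin (m+1) × Fin (n+1)}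
    (i : Fin m) (j : Fin n)
    (W : (gridGraph m n).Walk u v) (hW : W.IsPath)
    (hv : v ∉ squareCorners i j) (hcnt : cnt W i j = 1)
    (W' : (gridGraph m n).Walk u w) (hW' : W'.IsPath)
    (hpre : ∃ X : (gridGraph m n).Walk v w, W' = W.append X) :
    cnt W' i j ≤ 2 ∧ cnt W' i j ≠ 3 :=
  row2_sound_general i j W hv hcnt W' hW' hpre
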